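/- arXiv:1207.6633 — 5 statements merged into one kernel-verified Lean document; each statement's English description precedes it below -/
import Mathlib

section
/- Let N ≥ 2 and let e_1 ≤ e_2 ≤ … ≤ e_N be real numbers with e_1 ≥ 0. Let r_1 ≥ … ≥ r_N and r'_1 ≥ … ≥ r'_N be real numbers with r'_N = r_N and r_j ≤ r'_j for all 1 ≤ j ≤ N − 1. Then S(e, r) ≤ S(e, r'). -/
open Finset

/-- The value of a chain of indices `l = [i₀, i₁, …, i_ℓ]`:
`Σ_j (r i_j − r i_{j+1}) (e i_j + e i_{j+1})`. -/
def chainValue (e r : ℕ → ℝ) (l : List ℕ) : ℝ :=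
  (List.zipWith (fun a b => (r a - r b) * (e a + e b)) l l.tail).sum

/-- A chain of indices for parameter `N`: a strictly increasing list of indices
starting at `1` and ending at `N`. -/
def IsChainIdx (N : ℕ) (l : List ℕ) : Prop :=
  l.Chain' (· < ·) ∧ l.head? = some 1 ∧ l.getLast? = some N

/-- `S(e, r)` : the minimum of the values of all chains. -/
noncomputable def Smin (e r : ℕ → ℝ) (N : ℕ) : ℝ :=
  sInf (chainValue e r '' {l | IsChainIdx N l})

/-!
A chain value is linear in `r`, so it suffices that every chain has nonnegative value for
`d = r' − r`, which is nonnegative on `[1, N]` and vanishes at `N`. Summation by parts turns that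
value into `d i₀ (e i₀ + e i₁) + Σ_{0<j<ℓ} d i_j (e i_{j+1} − e i_{j−1})`, a sum of nonnegative
terms because `e` is nonnegative and nondecreasing. So `S(e, r) ≤ S(e, r')` holds chain by chain,
and the infima are taken over the finitely many chains.
-/

@[simp]
lemma chainValue_nil (e r : ℕ → ℝ) : chainValue e r [] = 0 := rfl

@[simp]
lemma chainValue_singleton (e r : ℕ → ℝ) (a : ℕ) : chainValue e r [a] = 0 := rfl

@[simp]
lemma chainValue_cons_cons (e r : ℕ → ℝ) (a b : ℕ) (l : List ℕ) :
    chainValue e r (a :: b :: l) = (r a - r b) * (e a + e b) + chainValue e r (b :: l) := by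
  simp [chainValue]

lemma chainValue_sub (e r r' : ℕ → ℝ) :
    ∀ l : List ℕ, chainValue e r' l - chainValue e r l = chainValue e (r' - r) l
  | [] | [_] => by simp
  | a :: b :: l => by
    rw [chainValue_cons_cons, chainValue_cons_cons, chainValue_cons_cons,
      ← chainValue_sub e r r' (b :: l)]
    simp only [Pi.sub_apply]
    ring

section SummationByParts

variable {e d : ℕ → ℝ} {s : Set ℕ}

lemma mul_le_chainValue_of_getLast (he : MonotoneOn e s) (hd : ∀ x ∈ s, 0 ≤ d x) {n : ℕ}
    (hn : d n = 0) :
    ∀ {a b : ℕ} {l : List ℕ}, (a :: b :: l).IsChain (· ≤ ·) → (∀ x ∈ a :: b :: l, x ∈ s) →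
      (a :: b :: l).getLast? = some n → d a * (e a + e b) ≤ chainValue e d (a :: b :: l)
  | a, b, [], _, _, hlast => by
    obtain rfl : b = n := by simpa using hlast
    simp [hn]
  | a, b, c :: l, hc, hs, hlast => by
    have hac : e a ≤ e c :=
      he (hs a (by simp)) (hs c (by simp)) ((List.isChain_cons_cons.1 hc).1.trans
        (List.isChain_cons_cons.1 hc.tail).1)
    have hbc := mul_le_chainValue_of_getLast he hd hn hc.tail (fun x hx => hs x (by simp [hx]))
      (by rwa [List.getLast?_cons_cons] at hlast)
    have hdb := hd b (hs b (by simp))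
    rw [chainValue_cons_cons]
    nlinarith

lemma chainValue_nonneg_of_getLast (he : MonotoneOn e s) (he₀ : ∀ x ∈ s, 0 ≤ e x)
    (hd : ∀ x ∈ s, 0 ≤ d x) {n : ℕ} (hn : d n = 0) :
    ∀ {l : List ℕ}, l.IsChain (· ≤ ·) → (∀ x ∈ l, x ∈ s) → l.getLast? = some n →
      0 ≤ chainValue e d l
  | [], _, _, _ | [_], _, _, _ => by simp
  | a :: b :: l, hc, hs, hlast => by
    have hab := he (hs a (by simp)) (hs b (by simp)) (List.isChain_cons_cons.1 hc).1
    have hbound := mul_le_chainValue_of_getLast he hd hn hc hs hlast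
    have hea := he₀ a (hs a (by simp))
    have hda := hd a (hs a (by simp))
    nlinarith

end SummationByParts

lemma IsChainIdx.mem_Icc {N : ℕ} {l : List ℕ} (h : IsChainIdx N l) :
    ∀ x ∈ l, x ∈ Set.Icc 1 N := by
  obtain ⟨hc, hhead, hlast⟩ := h
  intro x hx
  refine ⟨List.IsChain.induction (1 ≤ ·) l hc ?_ ?_ x hx,
    List.IsChain.backwards_induction (· ≤ N) l hc ?_ ?_ x hx⟩
  · intro a b hab ha
    omega
  · intro hne
    rw [List.head?_eq_some_head hne, Option.some_inj] at hhead
    omega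
  · intro a b hab hb
    omega
  · intro hne
    rw [List.getLast?_eq_some_getLast hne, Option.some_inj] at hlast
    omega

lemma IsChainIdx.sublist_range {N : ℕ} {l : List ℕ} (h : IsChainIdx N l) :
    l.Sublist (List.range (N + 1)) := by
  have hl : l.Pairwise (· < ·) := List.isChain_iff_pairwise.1 h.1
  refine List.sublist_of_subperm_of_pairwise (List.subperm_of_subset hl.nodup ?_) hl
    List.pairwise_lt_range
  intro x hx
  simpa [Nat.lt_succ_iff] using (h.mem_Icc x hx).2

lemma finite_setOf_isChainIdx (N : ℕ) : {l | IsChainIdx N l}.Finite :=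
  (List.range (N + 1)).sublists.toFinset.finite_toSet.subset fun l hl => by
    simpa using IsChainIdx.sublist_range hl

lemma Smin_mono {e r r' : ℕ → ℝ} {N : ℕ}
    (h : ∀ l, IsChainIdx N l → chainValue e r l ≤ chainValue e r' l) :
    Smin e r N ≤ Smin e r' N := by
  have := (finite_setOf_isChainIdx N).to_subtype
  simp only [Smin, sInf_image']
  exact ciInf_mono (Set.finite_range _).bddBelow fun l => h l l.2

theorem stmt2_general (N : ℕ) (e r r' : ℕ → ℝ)
    (he1 : 0 ≤ e 1)
    (hemono : ∀ i, 1 ≤ i → i < N → e i ≤ e (i + 1))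
    (hend : r' N = r N)
    (hle : ∀ j, 1 ≤ j → j ≤ N - 1 → r j ≤ r' j) :
    Smin e r N ≤ Smin e r' N := by
  have he : MonotoneOn e (Set.Icc 1 N) :=
    monotoneOn_of_le_add_one Set.ordConnected_Icc fun i _ hi hi' => hemono i hi.1 (by grind)
  have he₀ : ∀ x ∈ Set.Icc 1 N, 0 ≤ e x := fun x hx =>
    he1.trans (he ⟨le_rfl, hx.1.trans hx.2⟩ hx hx.1)
  have hd : ∀ x ∈ Set.Icc 1 N, 0 ≤ (r' - r) x := by
    intro x ⟨hx₁, hxN⟩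
    rcases hxN.lt_or_eq with hx | rfl
    · simpa using hle x hx₁ (by omega)
    · simp [hend]
  refine Smin_mono fun l hl => sub_nonneg.1 ?_
  rw [chainValue_sub]
  exact chainValue_nonneg_of_getLast he he₀ hd (by simp [hend])
    (hl.1.imp fun _ _ => le_of_lt) hl.mem_Icc hl.2.2

/-- Let `N ≥ 2`, `0 ≤ e₁ ≤ e₂ ≤ … ≤ e_N`, and let
`r₁ ≥ … ≥ r_N` and `r'₁ ≥ … ≥ r'_N` with `r'_N = r_N` and `r_j ≤ r'_j`
for all `1 ≤ j ≤ N − 1`. Then `S(e, r) ≤ S(e, r')`. -/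
theorem stmt2 (N : ℕ) (e r r' : ℕ → ℝ) (hN : 2 ≤ N)
    (he1 : 0 ≤ e 1)
    (hemono : ∀ i, 1 ≤ i → i < N → e i ≤ e (i + 1))
    (hr : ∀ i, 1 ≤ i → i < N → r (i + 1) ≤ r i)
    (hr' : ∀ i, 1 ≤ i → i < N → r' (i + 1) ≤ r' i)
    (hend : r' N = r N)
    (hle : ∀ j, 1 ≤ j → j ≤ N - 1 → r j ≤ r' j) :
    Smin e r N ≤ Smin e r' N :=
  stmt2_general N e r r' he1 hemono hend hle
end

section
/- Let N ≥ 2, let e_1 < e_2 < … < e_N be real numbers, and let r_1 ≥ r_2 ≥ … ≥ r_N be real numbers. Then there exist real numbers r'_1 ≥ r'_2 ≥ … ≥ r'_N with r'_1 = r_1, r'_N = r_N, r'_j ≤ r_j for all j, satisfying the convexity condition (r'_i − r'_{i+1})(e_i − e_{i−1}) ≤ (r'_{i−1} − r'_i)(e_{i+1} − e_i) for all 2 ≤ i ≤ N − 1, and such that S(e, r') = S(e, r). (This is the step of moving the points (e_j, r_j) down onto their Newton polygon, which changes neither S nor the endpoints but only decreases each r_j.) -/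
open Finset

/-!
Replace `r` by its lower convex hull `g` (as a function of `e`): the supremum of the affine
functions of `e` lying below the points `(e k, r k)`. Then `g ≤ r`, `g` agrees with `r` at both
endpoints, and `g` is convex, hence nonincreasing because `g N = r N` is the least value of `r`.

A chain's value is twice the trapezoid area under its polygon plus boundary terms, so it is
monotone in the interior values: every chain is worth at least as much for `r` as for `g`.
By convexity of `g`, inserting an index into a chain can only lower its `g`-value, so `S(e, g)`
is the value `V` of the full chain `1, 2, …, N`. At a strict change of slope `g` touches `r`, so
`g` is affine between consecutive touching points; the chain through the touching points
therefore has `r`-value `V`, and `S(e, r) = V` as well.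
-/

namespace NewtonPolygon

variable {N a b i j k : ℕ} {s : ℝ} {e ρ σ r : ℕ → ℝ} {l : List ℕ}

def edgeValue (e ρ : ℕ → ℝ) (a b : ℕ) : ℝ := (ρ a - ρ b) * (e a + e b)

def IsChainFromTo (a b : ℕ) (l : List ℕ) : Prop :=
  l.IsChain (· < ·) ∧ l.head? = some a ∧ l.getLast? = some b

theorem isChainFromTo_cons_cons {a' y : ℕ} {t : List ℕ} :
    IsChainFromTo a b (a' :: y :: t) ↔ a' = a ∧ a < y ∧ IsChainFromTo y b (y :: t) := by
  simp only [IsChainFromTo, List.isChain_cons_cons, List.head?_cons, Option.some.injEq,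
    List.getLast?_cons_cons, true_and]
  constructor
  · rintro ⟨⟨hy, ht⟩, rfl, hb⟩; exact ⟨rfl, hy, ht, hb⟩
  · rintro ⟨rfl, hy, ht, hb⟩; exact ⟨⟨hy, ht⟩, rfl, hb⟩

theorem IsChainFromTo.mem_Icc (h : IsChainFromTo a b l) {x : ℕ} (hx : x ∈ l) :
    x ∈ Set.Icc a b := by
  obtain ⟨hc, ha, hb⟩ := h
  rw [List.isChain_iff_pairwise] at hc
  obtain ⟨t, rfl⟩ := List.head?_eq_some_iff.1 ha
  obtain ⟨s, hs⟩ := List.getLast?_eq_some_iff.1 hb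
  constructor
  · rcases List.mem_cons.1 hx with rfl | hx
    · exact le_rfl
    · exact (List.pairwise_cons.1 hc).1 x hx |>.le
  · rw [hs] at hc hx
    rcases List.mem_append.1 hx with hx | hx
    · exact (List.pairwise_append.1 hc).2.2 x hx b (List.mem_singleton_self b) |>.le
    · exact (List.mem_singleton.1 hx).le

theorem chainValue_cons_cons (a b : ℕ) (t : List ℕ) :
    chainValue e ρ (a :: b :: t) = edgeValue e ρ a b + chainValue e ρ (b :: t) := rfl

theorem chainValue_append {l₁ : List ℕ} (t : List ℕ) (h : l₁.getLast? = some k) :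
    chainValue e ρ (l₁ ++ t) = chainValue e ρ l₁ + chainValue e ρ (k :: t) := by
  induction l₁ with
  | nil => simp at h
  | cons a l₁ ih =>
    cases l₁ with
    | nil =>
      obtain rfl : a = k := by simpa using h
      simp [chainValue]
    | cons c l₁ =>
      rw [List.getLast?_cons_cons] at h
      simp only [List.cons_append, chainValue_cons_cons] at ih ⊢
      rw [ih h, add_assoc]

theorem IsChainFromTo.append {l₁ t : List ℕ} (h₁ : IsChainFromTo a k l₁)
    (h₂ : IsChainFromTo k b (k :: t)) : IsChainFromTo a b (l₁ ++ t) := by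
  obtain ⟨hc₁, ha₁, hk₁⟩ := h₁
  cases t with
  | nil =>
    obtain rfl : k = b := by simpa [IsChainFromTo] using h₂.2.2
    rw [List.append_nil]
    exact ⟨hc₁, ha₁, hk₁⟩
  | cons y t =>
    obtain ⟨-, hky, hc₂, -, hb₂⟩ := isChainFromTo_cons_cons.1 h₂
    refine ⟨hc₁.append hc₂ ?_, ?_, ?_⟩
    · simp only [hk₁, Option.mem_def, Option.some.injEq, List.head?_cons]
      rintro _ rfl _ rfl
      exact hky
    · obtain ⟨s, rfl⟩ := List.head?_eq_some_iff.1 ha₁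
      simp
    · rw [List.getLast?_append_cons]
      exact hb₂

def pathValue (e ρ : ℕ → ℝ) (a b : ℕ) : ℝ := ∑ j ∈ Ico a b, edgeValue e ρ j (j + 1)

theorem pathValue_add (h₁ : a ≤ k) (h₂ : k ≤ b) :
    pathValue e ρ a k + pathValue e ρ k b = pathValue e ρ a b :=
  sum_Ico_consecutive _ h₁ h₂

theorem pathValue_succ (h : a ≤ b) :
    pathValue e ρ a (b + 1) = pathValue e ρ a b + edgeValue e ρ b (b + 1) :=
  sum_Ico_succ_top h _

theorem chainValue_range' (a n : ℕ) :
    chainValue e ρ (List.range' a (n + 1)) = pathValue e ρ a (a + n) := by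
  induction n generalizing a with
  | zero => simp [chainValue, pathValue]
  | succ n ih =>
    rw [List.range'_succ, List.range'_succ, chainValue_cons_cons,
      ← List.range'_succ, ih, show a + 1 + n = a + (n + 1) by omega,
      ← pathValue_add (a := a) (k := a + 1) (by omega) (by omega)]
    simp [pathValue]

theorem isChainFromTo_range' (a n : ℕ) : IsChainFromTo a (a + n) (List.range' a (n + 1)) :=
  ⟨(List.isChain_range' a (n + 1) 1).imp fun _ _ h => by omega, by simp [List.head?_range'],
    by simp [List.getLast?_range']⟩

theorem pathValue_eq_edgeValue_of_affine (hab : a ≤ b)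
    (h : ∀ k ∈ Set.Icc a b, ρ k = ρ a + s * (e k - e a)) :
    pathValue e ρ a b = edgeValue e ρ a b := by
  induction b, hab using Nat.le_induction with
  | base => simp [pathValue, edgeValue]
  | succ b hab ih =>
    rw [pathValue_succ hab, ih fun k hk => h k ⟨hk.1, hk.2.trans b.le_succ⟩]
    simp only [edgeValue, h b ⟨hab, by omega⟩, h (b + 1) ⟨by omega, le_rfl⟩]
    ring

/-- Convexity of `ρ` as a function of `e` on the indices `1, …, N`, with denominators cleared. -/
def ChordConvex (N : ℕ) (e ρ : ℕ → ℝ) : Prop :=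
  ∀ a k b, 1 ≤ a → a < k → k < b → b ≤ N →
    ρ k * (e b - e a) ≤ ρ a * (e b - e k) + ρ b * (e k - e a)

theorem edgeValue_add_edgeValue (a k b : ℕ) :
    edgeValue e ρ a k + edgeValue e ρ k b =
      edgeValue e ρ a b + (ρ k * (e b - e a) - (ρ a * (e b - e k) + ρ b * (e k - e a))) := by
  unfold edgeValue
  ring

theorem ChordConvex.edgeValue_add_edgeValue_le (hc : ChordConvex N e ρ) (ha : 1 ≤ a)
    (hak : a < k) (hkb : k < b) (hb : b ≤ N) :
    edgeValue e ρ a k + edgeValue e ρ k b ≤ edgeValue e ρ a b := by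
  rw [edgeValue_add_edgeValue]
  linarith [hc a k b ha hak hkb hb]

theorem ChordConvex.pathValue_le_edgeValue (hc : ChordConvex N e ρ) (ha : 1 ≤ a) (hab : a ≤ b)
    (hb : b ≤ N) : pathValue e ρ a b ≤ edgeValue e ρ a b := by
  induction b, hab using Nat.le_induction with
  | base => simp [pathValue, edgeValue]
  | succ b hab ih =>
    rw [pathValue_succ hab]
    rcases hab.eq_or_lt with rfl | hab
    · simp [pathValue, edgeValue]
    · linarith [ih (by omega), hc.edgeValue_add_edgeValue_le ha hab b.lt_succ_self hb]

theorem ChordConvex.pathValue_le_chainValue (hc : ChordConvex N e ρ) (hl : IsChainFromTo a b l)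
    (ha : 1 ≤ a) (hb : b ≤ N) : pathValue e ρ a b ≤ chainValue e ρ l := by
  induction l generalizing a with
  | nil => simp [IsChainFromTo] at hl
  | cons x t ih =>
    cases t with
    | nil =>
      obtain ⟨-, ha', hb'⟩ := hl
      obtain rfl : x = a := by simpa using ha'
      obtain rfl : x = b := by simpa using hb'
      simp [pathValue, chainValue]
    | cons y t =>
      obtain ⟨rfl, hxy, hl'⟩ := isChainFromTo_cons_cons.1 hl
      have hyb : y ≤ b := (hl'.mem_Icc List.mem_cons_self).2
      rw [chainValue_cons_cons, ← pathValue_add hxy.le hyb]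
      gcongr
      · exact hc.pathValue_le_edgeValue ha hxy.le (hyb.trans hb)
      · exact ih hl' (by omega)

/-- Twice the area under the polygon through the points `(e k, ρ k)`, `k ∈ l`. -/
def trapezoidValue (e ρ : ℕ → ℝ) (l : List ℕ) : ℝ :=
  (List.zipWith (fun a b => (ρ a + ρ b) * (e b - e a)) l l.tail).sum

theorem trapezoidValue_cons_cons (a b : ℕ) (t : List ℕ) :
    trapezoidValue e ρ (a :: b :: t) =
      (ρ a + ρ b) * (e b - e a) + trapezoidValue e ρ (b :: t) :=
  rfl

theorem chainValue_eq_trapezoidValue (ha : l.head? = some a) (hb : l.getLast? = some b) :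
    chainValue e ρ l = trapezoidValue e ρ l + 2 * (ρ a * e a - ρ b * e b) := by
  induction l generalizing a with
  | nil => simp at ha
  | cons x t ih =>
    obtain rfl : x = a := by simpa using ha
    cases t with
    | nil =>
      obtain rfl : x = b := by simpa using hb
      simp [chainValue, trapezoidValue]
    | cons y t =>
      rw [List.getLast?_cons_cons] at hb
      rw [chainValue_cons_cons, trapezoidValue_cons_cons, ih rfl hb, edgeValue]
      ring

theorem trapezoidValue_le_trapezoidValue (hl : l.IsChain (fun a b => e a ≤ e b))
    (hle : ∀ k ∈ l, ρ k ≤ σ k) : trapezoidValue e ρ l ≤ trapezoidValue e σ l := by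
  induction l with
  | nil => rfl
  | cons x t ih =>
    cases t with
    | nil => rfl
    | cons y t =>
      rw [List.isChain_cons_cons] at hl
      rw [trapezoidValue_cons_cons, trapezoidValue_cons_cons]
      gcongr ?_ * _ + ?_
      · exact sub_nonneg.2 hl.1
      · exact add_le_add (hle x (by simp)) (hle y (by simp))
      · exact ih hl.2 fun k hk => hle k (List.mem_cons_of_mem x hk)

theorem chainValue_le_chainValue (he : StrictMonoOn e (Set.Icc 1 N)) (hl : IsChainFromTo a b l)
    (ha : 1 ≤ a) (hb : b ≤ N) (hle : ∀ k ∈ l, ρ k ≤ σ k) (hρa : ρ a = σ a)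
    (hρb : ρ b = σ b) :
    chainValue e ρ l ≤ chainValue e σ l := by
  have hmem : ∀ x ∈ l, x ∈ Set.Icc 1 N := fun x hx =>
    ⟨ha.trans (hl.mem_Icc hx).1, (hl.mem_Icc hx).2.trans hb⟩
  have he' : l.IsChain (fun a b => e a ≤ e b) :=
    hl.1.imp_of_mem_imp fun x y hx hy hxy => (he (hmem x hx) (hmem y hy) hxy).le
  rw [chainValue_eq_trapezoidValue hl.2.1 hl.2.2, chainValue_eq_trapezoidValue hl.2.1 hl.2.2,
    hρa, hρb]
  gcongr
  exact trapezoidValue_le_trapezoidValue he' hle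

theorem lt_of_strictMonoOn (he : StrictMonoOn e (Set.Icc 1 N)) (ha : 1 ≤ a) (hab : a < b)
    (hb : b ≤ N) : e a < e b :=
  he ⟨ha, hab.le.trans hb⟩ ⟨ha.trans hab.le, hb⟩ hab

noncomputable def stepSlope (e ρ : ℕ → ℝ) (j : ℕ) : ℝ :=
  (ρ (j + 1) - ρ j) / (e (j + 1) - e j)

theorem sub_eq_stepSlope_mul (he : e j < e (j + 1)) :
    ρ (j + 1) - ρ j = stepSlope e ρ j * (e (j + 1) - e j) := by
  rw [stepSlope, div_mul_cancel₀ _ (sub_pos.2 he).ne']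

theorem ChordConvex.stepSlope_mul_le (hc : ChordConvex N e ρ) (he : StrictMonoOn e (Set.Icc 1 N))
    (ha : 1 ≤ a) (hab : a < b) (hb : b ≤ N) :
    stepSlope e ρ a * (e b - e a) ≤ ρ b - ρ a := by
  have hd : 0 < e (a + 1) - e a := sub_pos.2 (lt_of_strictMonoOn he ha a.lt_succ_self (by omega))
  have hstep := sub_eq_stepSlope_mul (ρ := ρ) (sub_pos.1 hd)
  rcases (Nat.succ_le_of_lt hab).eq_or_lt with rfl | hab
  · exact hstep.ge
  · have hconv := hc a (a + 1) b ha a.lt_succ_self hab hb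
    rw [eq_add_of_sub_eq hstep] at hconv
    refine le_of_mul_le_mul_left ?_ hd
    linarith

theorem ChordConvex.sub_le_stepSlope_mul (hc : ChordConvex N e ρ)
    (he : StrictMonoOn e (Set.Icc 1 N)) (ha : 1 ≤ a) (hab : a ≤ b) (hb : b + 1 ≤ N) :
    ρ (b + 1) - ρ a ≤ stepSlope e ρ b * (e (b + 1) - e a) := by
  have hd : 0 < e (b + 1) - e b := sub_pos.2 (lt_of_strictMonoOn he (by omega) b.lt_succ_self hb)
  have hstep := sub_eq_stepSlope_mul (ρ := ρ) (sub_pos.1 hd)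
  rcases hab.eq_or_lt with rfl | hab
  · exact hstep.le
  · have hconv := hc a b (b + 1) ha hab b.lt_succ_self hb
    rw [eq_add_of_sub_eq hstep] at hconv ⊢
    refine le_of_mul_le_mul_left ?_ hd
    linarith

theorem ChordConvex.stepSlope_le_stepSlope_succ (hc : ChordConvex N e ρ)
    (he : StrictMonoOn e (Set.Icc 1 N)) (hj : 1 ≤ j) (hjN : j + 2 ≤ N) :
    stepSlope e ρ j ≤ stepSlope e ρ (j + 1) := by
  have hd : 0 < e (j + 1) - e j := sub_pos.2 (lt_of_strictMonoOn he hj j.lt_succ_self (by omega))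
  have hstep := sub_eq_stepSlope_mul (ρ := ρ) (sub_pos.1 hd)
  have hle := hc.sub_le_stepSlope_mul he hj j.le_succ hjN
  have hstep' := sub_eq_stepSlope_mul (ρ := ρ) (j := j + 1)
    (lt_of_strictMonoOn he (by omega) (j + 1).lt_succ_self hjN)
  refine le_of_mul_le_mul_right ?_ hd
  nlinarith

theorem ChordConvex.add_mul_sub_lt (hc : ChordConvex N e ρ) (he : StrictMonoOn e (Set.Icc 1 N))
    (hi : 1 ≤ i) (hiN : i + 2 ≤ N) (hs₁ : stepSlope e ρ i < s)
    (hs₂ : s < stepSlope e ρ (i + 1)) (hk : k ∈ Set.Icc 1 N) (hki : k ≠ i + 1) :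
    ρ (i + 1) + s * (e k - e (i + 1)) < ρ k := by
  rcases Nat.lt_or_gt_of_ne hki with hki | hki
  · have hd : 0 < e (i + 1) - e k := sub_pos.2 (lt_of_strictMonoOn he hk.1 hki (by omega))
    have := hc.sub_le_stepSlope_mul he hk.1 (Nat.le_of_lt_succ hki) (by omega)
    nlinarith
  · have hd : 0 < e k - e (i + 1) := sub_pos.2 (lt_of_strictMonoOn he (by omega) hki hk.2)
    have := hc.stepSlope_mul_le he (by omega) hki hk.2
    nlinarith

theorem eq_add_mul_of_stepSlope_eq (he : StrictMonoOn e (Set.Icc 1 N)) (ha : 1 ≤ a)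
    (hb : b ≤ N) (h : ∀ j ∈ Ico a b, stepSlope e ρ j = s) :
    ∀ k ∈ Set.Icc a b, ρ k = ρ a + s * (e k - e a) := by
  rintro k ⟨hak, hkb⟩
  induction k, hak using Nat.le_induction with
  | base => ring
  | succ k hak ih =>
    have hstep := sub_eq_stepSlope_mul (ρ := ρ)
      (lt_of_strictMonoOn he (by omega) k.lt_succ_self (by omega))
    rw [h k (mem_Ico.2 ⟨hak, by omega⟩)] at hstep
    linarith [ih (by omega)]

def IsAffineMinorant (N : ℕ) (e r : ℕ → ℝ) (s c : ℝ) : Prop :=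
  ∀ k ∈ Set.Icc 1 N, s * e k + c ≤ r k

/-- The lower boundary of the Newton polygon of the points `(e k, r k)`, `1 ≤ k ≤ N`. -/
noncomputable def lowerHull (N : ℕ) (e r : ℕ → ℝ) (j : ℕ) : ℝ :=
  sSup {y | ∃ s c, IsAffineMinorant N e r s c ∧ y = s * e j + c}

theorem exists_isAffineMinorant (N : ℕ) (e r : ℕ → ℝ) :
    ∃ c, IsAffineMinorant N e r 0 c := by
  obtain ⟨c, hc⟩ := ((Set.finite_Icc 1 N).image r).bddBelow
  exact ⟨c, fun k hk => by simpa using hc (Set.mem_image_of_mem r hk)⟩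

theorem le_lowerHull {c : ℝ} (hm : IsAffineMinorant N e r s c)
    (hj : j ∈ Set.Icc 1 N) :
    s * e j + c ≤ lowerHull N e r j :=
  le_csSup ⟨r j, by rintro _ ⟨s', c', hm', rfl⟩; exact hm' j hj⟩ ⟨s, c, hm, rfl⟩

theorem lowerHull_le_of_forall {y : ℝ}
    (h : ∀ s c, IsAffineMinorant N e r s c → s * e j + c ≤ y) : lowerHull N e r j ≤ y := by
  obtain ⟨c, hc⟩ := exists_isAffineMinorant N e r
  exact csSup_le ⟨_, 0, c, hc, rfl⟩ (by rintro _ ⟨s, c, hm, rfl⟩; exact h s c hm)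

theorem lowerHull_le (hj : j ∈ Set.Icc 1 N) : lowerHull N e r j ≤ r j :=
  lowerHull_le_of_forall fun _ _ hm => hm j hj

theorem chordConvex_lowerHull (he : StrictMonoOn e (Set.Icc 1 N)) :
    ChordConvex N e (lowerHull N e r) := by
  intro a k b ha hak hkb hb
  have hk : 0 < e k - e a := sub_pos.2 (lt_of_strictMonoOn he ha hak (by omega))
  have hb' : 0 < e b - e k := sub_pos.2 (lt_of_strictMonoOn he (by omega) hkb hb)
  rw [← le_div_iff₀ (by linarith)]
  refine lowerHull_le_of_forall fun s c hm => ?_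
  rw [le_div_iff₀ (by linarith)]
  calc (s * e k + c) * (e b - e a)
      = (s * e a + c) * (e b - e k) + (s * e b + c) * (e k - e a) := by ring
    _ ≤ _ := by
      gcongr
      · exact le_lowerHull hm ⟨ha, by omega⟩
      · exact le_lowerHull hm ⟨by omega, hb⟩

theorem lowerHull_eq_of_le (hj : j ∈ Set.Icc 1 N)
    (h : ∀ k ∈ Set.Icc 1 N, r j + s * (e k - e j) ≤ r k) : lowerHull N e r j = r j := by
  refine (lowerHull_le hj).antisymm ?_
  have hm : IsAffineMinorant N e r s (r j - s * e j) := fun k hk => by linarith [h k hk]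
  linarith [le_lowerHull hm hj]

theorem lowerHull_eq_of_lt (hj : j ∈ Set.Icc 1 N)
    (h : ∀ k ∈ Set.Icc 1 N, k ≠ j → lowerHull N e r j + s * (e k - e j) < r k) :
    lowerHull N e r j = r j := by
  by_contra hne
  have hlt := (lowerHull_le hj).lt_of_ne hne
  set gap : ℕ → ℝ := fun k => r k - (lowerHull N e r j + s * (e k - e j))
  have hpos : ∀ k ∈ Finset.Icc 1 N, 0 < gap k := by
    intro k hk
    rw [Finset.mem_Icc] at hk
    rcases eq_or_ne k j with rfl | hkj
    · simp [gap, hlt]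
    · exact sub_pos.2 (h k hk hkj)
  have hne' : (Finset.Icc 1 N).Nonempty := ⟨j, Finset.mem_Icc.2 hj⟩
  -- raising the line through `(e j, lowerHull N e r j)` by the least gap keeps it below `r`
  have hm : IsAffineMinorant N e r s
      (lowerHull N e r j - s * e j + (Finset.Icc 1 N).inf' hne' gap) :=
    fun k hk => by
      have := Finset.inf'_le gap (Finset.mem_Icc.2 hk)
      simp only [gap] at this
      linarith
  have := le_lowerHull hm hj
  linarith [(Finset.lt_inf'_iff hne').2 hpos]

theorem lowerHull_one (he : StrictMonoOn e (Set.Icc 1 N)) (hN : 1 ≤ N) :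
    lowerHull N e r 1 = r 1 := by
  obtain ⟨s, hs⟩ := ((Set.finite_Icc 1 N).image fun k => (r k - r 1) / (e k - e 1)).bddBelow
  refine lowerHull_eq_of_le (s := s) ⟨le_rfl, hN⟩ fun k hk => ?_
  rcases hk.1.eq_or_lt with rfl | hk1
  · simp
  · have hd : 0 < e k - e 1 := sub_pos.2 (lt_of_strictMonoOn he le_rfl hk1 hk.2)
    have := (le_div_iff₀ hd).1 (hs (Set.mem_image_of_mem _ hk))
    linarith

theorem lowerHull_last (he : StrictMonoOn e (Set.Icc 1 N)) (hN : 1 ≤ N) :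
    lowerHull N e r N = r N := by
  obtain ⟨s, hs⟩ := ((Set.finite_Icc 1 N).image fun k => (r k - r N) / (e k - e N)).bddAbove
  refine lowerHull_eq_of_le (s := s) ⟨hN, le_rfl⟩ fun k hk => ?_
  rcases hk.2.eq_or_lt with rfl | hkN
  · simp
  · have hd : e k - e N < 0 := sub_neg.2 (lt_of_strictMonoOn he hk.1 hkN le_rfl)
    have := (div_le_iff_of_neg hd).1 (hs (Set.mem_image_of_mem _ hk))
    linarith

theorem lowerHull_succ_le (he : StrictMonoOn e (Set.Icc 1 N)) (hr : AntitoneOn r (Set.Icc 1 N))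
    (hi : 1 ≤ i) (hiN : i < N) : lowerHull N e r (i + 1) ≤ lowerHull N e r i := by
  have hlast := lowerHull_last (r := r) he (by omega)
  have hrN : r N ≤ lowerHull N e r i := by
    have hm : IsAffineMinorant N e r 0 (r N) := fun k hk => by
      simpa using hr hk ⟨by omega, le_rfl⟩ hk.2
    simpa using le_lowerHull hm ⟨hi, hiN.le⟩
  obtain hN | hN : i + 1 = N ∨ i + 1 < N := by omega
  · rw [hN, hlast]
    exact hrN
  · have hconv := chordConvex_lowerHull (r := r) he i (i + 1) N hi i.lt_succ_self hN le_rfl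
    have hd : 0 < e N - e i := sub_pos.2 (lt_of_strictMonoOn he hi hiN le_rfl)
    have hd' : 0 ≤ e (i + 1) - e i :=
      sub_nonneg.2 (lt_of_strictMonoOn he hi i.lt_succ_self hN.le).le
    refine le_of_mul_le_mul_right ?_ hd
    rw [hlast] at hconv
    nlinarith [mul_le_mul_of_nonneg_right hrN hd']

theorem lowerHull_eq_of_stepSlope_lt (he : StrictMonoOn e (Set.Icc 1 N)) (hi : 1 ≤ i)
    (hiN : i + 2 ≤ N)
    (h : stepSlope e (lowerHull N e r) i < stepSlope e (lowerHull N e r) (i + 1)) :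
    lowerHull N e r (i + 1) = r (i + 1) :=
  lowerHull_eq_of_lt (s := (stepSlope e (lowerHull N e r) i +
      stepSlope e (lowerHull N e r) (i + 1)) / 2) ⟨by omega, by omega⟩ fun _k hk hki =>
    ((chordConvex_lowerHull he).add_mul_sub_lt he hi hiN (by linarith) (by linarith) hk
      hki).trans_le (lowerHull_le hk)

theorem stepSlope_lowerHull_eq_of_forall_ne (he : StrictMonoOn e (Set.Icc 1 N)) (ha : 1 ≤ a)
    (hb : b ≤ N) (hno : ∀ k, a < k → k < b → lowerHull N e r k ≠ r k) :
    ∀ j ∈ Ico a b, stepSlope e (lowerHull N e r) j = stepSlope e (lowerHull N e r) a := by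
  intro j hj
  obtain ⟨haj, hjb⟩ := mem_Ico.1 hj
  clear hj
  induction j, haj using Nat.le_induction with
  | base => rfl
  | succ j haj ih =>
    rw [← ih (by omega)]
    refine le_antisymm ?_
      ((chordConvex_lowerHull he).stepSlope_le_stepSlope_succ he (by omega) (by omega))
    by_contra! hlt
    exact hno (j + 1) (by omega) hjb (lowerHull_eq_of_stepSlope_lt he (by omega) (by omega) hlt)

theorem pathValue_lowerHull_of_forall_ne (he : StrictMonoOn e (Set.Icc 1 N)) (ha : 1 ≤ a)
    (hab : a ≤ b) (hb : b ≤ N) (hno : ∀ k, a < k → k < b → lowerHull N e r k ≠ r k) :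
    pathValue e (lowerHull N e r) a b = edgeValue e (lowerHull N e r) a b :=
  pathValue_eq_edgeValue_of_affine hab
    (eq_add_mul_of_stepSlope_eq he ha hb (stepSlope_lowerHull_eq_of_forall_ne he ha hb hno))

theorem exists_chain_eq_pathValue_lowerHull (he : StrictMonoOn e (Set.Icc 1 N)) {a b : ℕ}
    (ha : 1 ≤ a) (hab : a < b) (hb : b ≤ N) (hga : lowerHull N e r a = r a)
    (hgb : lowerHull N e r b = r b) :
    ∃ l, IsChainFromTo a b l ∧ chainValue e r l = pathValue e (lowerHull N e r) a b := by
  by_cases hk : ∃ k, a < k ∧ k < b ∧ lowerHull N e r k = r k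
  · obtain ⟨k, hak, hkb, hgk⟩ := hk
    obtain ⟨l₁, hl₁, hv₁⟩ :=
      exists_chain_eq_pathValue_lowerHull he ha hak (by omega) hga hgk
    obtain ⟨l₂, hl₂, hv₂⟩ :=
      exists_chain_eq_pathValue_lowerHull he (by omega) hkb hb hgk hgb
    obtain ⟨t, rfl⟩ := List.head?_eq_some_iff.1 hl₂.2.1
    refine ⟨l₁ ++ t, hl₁.append hl₂, ?_⟩
    rw [chainValue_append t hl₁.2.2, hv₁, hv₂, pathValue_add hak.le hkb.le]
  · push Not at hk
    refine ⟨[a, b], isChainFromTo_cons_cons.2 ⟨rfl, hab, by simp [IsChainFromTo]⟩, ?_⟩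
    rw [pathValue_lowerHull_of_forall_ne he ha hab.le hb hk, chainValue_cons_cons, edgeValue,
      edgeValue, hga, hgb]
    simp [chainValue]
termination_by b - a

theorem Smin_eq_of_isLeast {v : ℝ} (h : IsLeast (chainValue e ρ '' {l | IsChainIdx N l}) v) :
    Smin e ρ N = v :=
  h.csInf_eq

theorem isLeast_pathValue_of_chordConvex (hc : ChordConvex N e ρ) (hN : 1 ≤ N) :
    IsLeast (chainValue e ρ '' {l | IsChainIdx N l}) (pathValue e ρ 1 N) := by
  obtain ⟨n, rfl⟩ : ∃ n, N = 1 + n := ⟨N - 1, by omega⟩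
  refine ⟨⟨List.range' 1 (n + 1), isChainFromTo_range' 1 n, chainValue_range' 1 n⟩, ?_⟩
  rintro _ ⟨l, hl, rfl⟩
  exact hc.pathValue_le_chainValue hl le_rfl le_rfl

theorem isLeast_pathValue_lowerHull (he : StrictMonoOn e (Set.Icc 1 N)) (hN : 1 < N) :
    IsLeast (chainValue e r '' {l | IsChainIdx N l}) (pathValue e (lowerHull N e r) 1 N) := by
  have hone := lowerHull_one (r := r) he hN.le
  have hlast := lowerHull_last (r := r) he hN.le
  obtain ⟨l, hl, hv⟩ := exists_chain_eq_pathValue_lowerHull he le_rfl hN le_rfl hone hlast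
  refine ⟨⟨l, hl, hv⟩, ?_⟩
  rintro _ ⟨l, hl : IsChainFromTo 1 N l, rfl⟩
  calc pathValue e (lowerHull N e r) 1 N ≤ chainValue e (lowerHull N e r) l :=
        (chordConvex_lowerHull he).pathValue_le_chainValue hl le_rfl le_rfl
    _ ≤ chainValue e r l :=
        chainValue_le_chainValue he hl le_rfl le_rfl (fun k hk => lowerHull_le (hl.mem_Icc hk))
          hone hlast

end NewtonPolygon

open NewtonPolygon

/-- Let `N ≥ 2`, `e₁ < e₂ < … < e_N` and `r₁ ≥ r₂ ≥ … ≥ r_N`.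
Then there exist `r'₁ ≥ … ≥ r'_N` with `r'₁ = r₁`, `r'_N = r_N`, `r'_j ≤ r_j`
for all `j`, satisfying the convexity condition
`(r'_i − r'_{i+1})(e_i − e_{i−1}) ≤ (r'_{i−1} − r'_i)(e_{i+1} − e_i)` for
`2 ≤ i ≤ N − 1`, and with `S(e, r') = S(e, r)`
(moving the points onto their Newton polygon). -/
theorem stmt3 (N : ℕ) (e r : ℕ → ℝ) (hN : 2 ≤ N)
    (hemono : ∀ i, 1 ≤ i → i < N → e i < e (i + 1))
    (hr : ∀ i, 1 ≤ i → i < N → r (i + 1) ≤ r i) :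
    ∃ r' : ℕ → ℝ,
      (∀ i, 1 ≤ i → i < N → r' (i + 1) ≤ r' i) ∧
      r' 1 = r 1 ∧ r' N = r N ∧
      (∀ j, 1 ≤ j → j ≤ N → r' j ≤ r j) ∧
      (∀ i, 2 ≤ i → i ≤ N - 1 →
        (r' i - r' (i + 1)) * (e i - e (i - 1)) ≤ (r' (i - 1) - r' i) * (e (i + 1) - e i)) ∧
      Smin e r' N = Smin e r N := by
  have he : StrictMonoOn e (Set.Icc 1 N) :=
    strictMonoOn_of_lt_add_one Set.ordConnected_Icc fun i _ hi hi' => hemono i hi.1 hi'.2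
  have hr' : AntitoneOn r (Set.Icc 1 N) :=
    antitoneOn_of_add_one_le Set.ordConnected_Icc fun i _ hi hi' => hr i hi.1 hi'.2
  have hc := chordConvex_lowerHull (r := r) he
  refine ⟨lowerHull N e r, fun i hi hiN => lowerHull_succ_le he hr' hi hiN,
    lowerHull_one he (by omega), lowerHull_last he (by omega),
    fun j hj hjN => lowerHull_le ⟨hj, hjN⟩, fun i hi hiN => ?_, ?_⟩
  · obtain ⟨j, rfl⟩ : ∃ j, i = j + 1 := ⟨i - 1, by omega⟩
    have := hc j (j + 1) (j + 1 + 1) (by omega) (by omega) (by omega) (by omega)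
    rw [Nat.add_sub_cancel]
    linarith
  · rw [Smin_eq_of_isLeast (isLeast_pathValue_of_chordConvex hc (by omega)),
      Smin_eq_of_isLeast (isLeast_pathValue_lowerHull he (by omega))]
end

section
/- Let N, s, t be integers with 1 ≤ s < t ≤ N, and let e_1, …, e_N be real numbers with e_1 = 0, e_s = e_{s+1} = … = e_{t−1}, and e_{j−1} < e_j for every j in J = {2, …, s} ∪ {t, …, N}. Let σ_2, …, σ_N be real numbers with σ_j ≥ 0 for all j, σ_j = 0 for s+1 ≤ j ≤ t−1, such that the ratios σ_j/(e_j − e_{j−1}) are nonincreasing along J (equivalently, σ_j (e_{j'} − e_{j'−1}) ≥ σ_{j'} (e_j − e_{j−1}) whenever j < j' are consecutive elements of J), and such that Σ_{j=2}^{s} (j−1) σ_j + Σ_{j=t}^{N} (j−t+s) σ_j = 1. Then Σ_{j∈J} σ_j (e_{j−1} + e_j) ≤ B(s,t). -/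
/-!
Deleting the plateau indices `s+1, …, t-1`, on which `e` is constant, reduces the claim to a
single block `E_1 = 0 < E_2 < … < E_M` with weights `k - 1`; then `B_i = E_i² / D_i` with
`D_i = ∑_{k=2}^{i} (k - 1)(E_k - E_{k-1})`. With `r_k = σ_k / (E_k - E_{k-1})`, which is
nonnegative and nonincreasing, `σ_k (E_{k-1} + E_k) = r_k (E_k² - E_{k-1}²)` and
`(k - 1) σ_k = r_k (k - 1)(E_k - E_{k-1})`. The prefix sums of `E_k² - E_{k-1}²` are
`E_i² ≤ B · D_i`, so Abel summation against the nonincreasing `r_k` gives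
`∑ σ_k (E_{k-1} + E_k) ≤ B ∑ (k - 1) σ_k = B`.
-/

open Finset

/-- The quantity `B_i`: for `2 ≤ i ≤ s`, `B_i = e_i² / ((i−1)e_i − Σ_{j=2}^{i−1} e_j)`;
for `t ≤ i ≤ N`, `B_i = e_i² / ((i−t+s)e_i − (e_1 + … + e_s + e_t + … + e_{i−1}))`. -/
noncomputable def Bcoef (e : ℕ → ℝ) (s t i : ℕ) : ℝ :=
  if i ≤ s then
    (e i) ^ 2 / (((i : ℝ) - 1) * e i - ∑ j ∈ Finset.Icc 2 (i - 1), e j)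
  else
    (e i) ^ 2 /
      (((i : ℝ) - t + s) * e i -
        (∑ j ∈ Finset.Icc 1 s, e j + ∑ j ∈ Finset.Icc t (i - 1), e j))

/-- `B(s,t)`: the maximum of the `B_i` over `i ∈ {2,…,s} ∪ {t,…,N}`. -/
noncomputable def Bmax (e : ℕ → ℝ) (s t N : ℕ) : ℝ :=
  sSup (Bcoef e s t '' (Set.Icc 2 s ∪ Set.Icc t N))

theorem sum_mul_nonpos_of_antitoneOn {ι R : Type*} [LinearOrder ι] [CommRing R] [LinearOrder R]
    [IsStrictOrderedRing R] (J : Finset ι) (r h : ι → R) (hr : ∀ j ∈ J, 0 ≤ r j)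
    (hanti : AntitoneOn r J) (hprefix : ∀ i ∈ J, ∑ j ∈ J with j ≤ i, h j ≤ 0) :
    ∑ j ∈ J, r j * h j ≤ 0 := by
  induction J using Finset.induction_on_max generalizing r with
  | empty => simp
  | insert m J hlt ih =>
    have hmJ : m ∉ J := fun hm => (hlt m hm).false
    have hall : ∀ j ∈ insert m J, j ≤ m := by
      simpa [or_imp, forall_and] using fun j hj => (hlt j hj).le
    have hsplit : ∑ j ∈ insert m J, r j * h j
        = ∑ j ∈ J, (r j - r m) * h j + r m * ∑ j ∈ insert m J, h j := by
      simp only [sum_insert hmJ, sub_mul, sum_sub_distrib, ← mul_sum]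
      ring
    have hrest : ∑ j ∈ J, (r j - r m) * h j ≤ 0 := by
      refine ih (fun j => r j - r m) (fun j hj => ?_) (fun j hj j' hj' hjj' => ?_)
        (fun i hi => ?_)
      · exact sub_nonneg.2 (hanti (by simp [hj]) (by simp) (hlt j hj).le)
      · exact sub_le_sub_right (hanti (by simp [hj]) (by simp [hj']) hjj') _
      · have := hprefix i (by simp [hi])
        rwa [filter_insert, if_neg (not_le.2 (hlt i hi))] at this
    have hlast : r m * ∑ j ∈ insert m J, h j ≤ 0 := by
      have := hprefix m (by simp)
      rw [filter_true_of_mem hall] at this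
      exact mul_nonpos_of_nonneg_of_nonpos (hr m (by simp)) this
    rw [hsplit]
    exact add_nonpos hrest hlast

theorem sum_Icc_sub_pred {R : Type*} [AddCommGroup R] (f : ℕ → R) {a i : ℕ} (hai : a ≤ i) :
    ∑ k ∈ Icc (a + 1) i, (f k - f (k - 1)) = f i - f a := by
  induction i, hai using Nat.le_induction with
  | base => simp
  | succ n hn ih =>
    rw [sum_Icc_succ_top (by omega), ih, Nat.add_sub_cancel]
    abel

-- The denominator of `B_i` for `i ≤ s`.
noncomputable def bDenom (E : ℕ → ℝ) (i : ℕ) : ℝ :=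
  ((i : ℝ) - 1) * E i - ∑ k ∈ Icc 2 (i - 1), E k

theorem sum_Icc_two_mul_sub_pred_eq_bDenom (E : ℕ → ℝ) (hE1 : E 1 = 0) {i : ℕ} (hi : 1 ≤ i) :
    ∑ k ∈ Icc 2 i, ((k : ℝ) - 1) * (E k - E (k - 1)) = bDenom E i := by
  induction i, hi using Nat.le_induction with
  | base => simp [bDenom]
  | succ n hn ih =>
    have hsum : ∑ k ∈ Icc 2 n, E k = ∑ k ∈ Icc 2 (n - 1), E k + E n := by
      obtain rfl | hn2 := hn.eq_or_lt
      · simp [hE1]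
      · obtain ⟨m, rfl⟩ := Nat.exists_eq_add_of_lt hn2
        rw [show 1 + m + 1 = m + 1 + 1 by ring, sum_Icc_succ_top (by omega)]
        simp
    rw [sum_Icc_succ_top (by omega), ih, bDenom, bDenom, Nat.add_sub_cancel, hsum]
    push_cast
    ring

theorem bDenom_pos (E : ℕ → ℝ) (hE1 : E 1 = 0) {i : ℕ} (hi : 2 ≤ i)
    (hE : ∀ k ∈ Icc 2 i, E (k - 1) < E k) : 0 < bDenom E i := by
  rw [← sum_Icc_two_mul_sub_pred_eq_bDenom E hE1 (by omega)]
  refine sum_pos (fun k hk => mul_pos ?_ (sub_pos.2 (hE k hk))) ⟨i, by simp [hi]⟩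
  have : (2 : ℝ) ≤ k := by exact_mod_cast (mem_Icc.1 hk).1
  linarith

theorem sum_mul_add_pred_le_of_sq_div_bDenom_le (M : ℕ) (E σ : ℕ → ℝ) (B : ℝ) (hE1 : E 1 = 0)
    (hE : ∀ k ∈ Icc 2 M, E (k - 1) < E k) (hσ : ∀ k ∈ Icc 2 M, 0 ≤ σ k)
    (hratio : ∀ j ∈ Icc 2 M, ∀ j' ∈ Icc 2 M, j < j' →
      σ j' * (E j - E (j - 1)) ≤ σ j * (E j' - E (j' - 1)))
    (hnorm : ∑ k ∈ Icc 2 M, ((k : ℝ) - 1) * σ k = 1)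
    (hB : ∀ i ∈ Icc 2 M, E i ^ 2 / bDenom E i ≤ B) :
    ∑ k ∈ Icc 2 M, σ k * (E (k - 1) + E k) ≤ B := by
  have hd : ∀ k ∈ Icc 2 M, 0 < E k - E (k - 1) := fun k hk => sub_pos.2 (hE k hk)
  set r : ℕ → ℝ := fun k => σ k / (E k - E (k - 1))
  set h : ℕ → ℝ := fun k => (E k ^ 2 - E (k - 1) ^ 2) - B * (((k : ℝ) - 1) * (E k - E (k - 1)))
  have hprefix : ∀ i ∈ Icc 2 M, ∑ k ∈ Icc 2 M with k ≤ i, h k ≤ 0 := by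
    intro i hi
    have hi2 : 2 ≤ i := (mem_Icc.1 hi).1
    have hfilter : {k ∈ Icc 2 M | k ≤ i} = Icc 2 i := by
      ext k; simp only [mem_filter, mem_Icc]; have := (mem_Icc.1 hi).2; omega
    have hDpos : 0 < bDenom E i :=
      bDenom_pos E hE1 hi2 fun k hk => hE k (Icc_subset_Icc_right (mem_Icc.1 hi).2 hk)
    rw [hfilter, sum_sub_distrib, ← mul_sum, sum_Icc_sub_pred (fun k => E k ^ 2) (by omega),
      sum_Icc_two_mul_sub_pred_eq_bDenom E hE1 (by omega), hE1]
    have := (div_le_iff₀ hDpos).1 (hB i hi)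
    linarith
  have habel := sum_mul_nonpos_of_antitoneOn (Icc 2 M) r h
    (fun k hk => div_nonneg (hσ k hk) (hd k hk).le)
    (fun j hj j' hj' hjj' => by
      obtain rfl | hlt := hjj'.eq_or_lt
      · rfl
      · exact (div_le_div_iff₀ (hd j' hj') (hd j hj)).2 (hratio j hj j' hj' hlt))
    hprefix
  have hterm : ∀ k ∈ Icc 2 M,
      r k * h k = σ k * (E (k - 1) + E k) - B * (((k : ℝ) - 1) * σ k) := by
    intro k hk
    have hdk := (hd k hk).ne'
    simp only [r, h]
    field_simp
    ring
  rw [sum_congr rfl hterm, sum_sub_distrib, ← mul_sum, hnorm] at habel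
  linarith

-- Maps `{2, …, N - (t - s - 1)}` increasingly onto `J = {2, …, s} ∪ {t, …, N}`.
def skipPlateau (s t k : ℕ) : ℕ := if k ≤ s then k else k + (t - s - 1)

section skipPlateau

variable {s t : ℕ}

theorem skipPlateau_of_le {k : ℕ} (hk : k ≤ s) : skipPlateau s t k = k := if_pos hk

theorem skipPlateau_of_lt {k : ℕ} (hk : s < k) : skipPlateau s t k = k + (t - s - 1) :=
  if_neg hk.not_ge

theorem skipPlateau_strictMono : StrictMono (skipPlateau s t) := by
  intro a b hab
  unfold skipPlateau
  split_ifs <;> omega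

theorem skipPlateau_mem {M k : ℕ} (hk : k ∈ Icc 2 M) :
    skipPlateau s t k ∈ Icc 2 s ∪ Icc t (M + (t - s - 1)) := by
  simp only [mem_Icc] at hk
  simp only [mem_union, mem_Icc, skipPlateau]
  split_ifs <;> omega

theorem cast_skipPlateau_sub (hst : s < t) {k : ℕ} (hk : s < k) :
    (skipPlateau s t k : ℝ) - t + s = k - 1 := by
  rw [skipPlateau_of_lt hk, Nat.cast_add, Nat.cast_sub (by omega), Nat.cast_sub hst.le]
  push_cast
  ring

theorem skipPlateau_sub_one (e : ℕ → ℝ) (he : e (t - 1) = e s) (k : ℕ) :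
    e (skipPlateau s t k - 1) = e (skipPlateau s t (k - 1)) := by
  unfold skipPlateau
  split_ifs with h₁ h₂ h₂
  · rfl
  · omega
  · rw [show k - 1 = s by omega]
    obtain h | h : k + (t - s - 1) - 1 = t - 1 ∨ k + (t - s - 1) - 1 = s := by omega
    · rw [h, he]
    · rw [h]
  · congr 1
    omega

theorem sum_Icc_skipPlateau {R : Type*} [AddCommMonoid R] (g : ℕ → R) (hs : 1 ≤ s)
    (hst : s < t) {M : ℕ} (hM : s ≤ M) :
    ∑ k ∈ Icc 2 M, g (skipPlateau s t k) =
      ∑ j ∈ Icc 2 s, g j + ∑ j ∈ Icc t (M + (t - s - 1)), g j := by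
  have hsplit : Icc 2 M = Icc 2 s ∪ Icc (s + 1) M := by
    ext k; simp only [mem_union, mem_Icc]; omega
  have hdisj : Disjoint (Icc 2 s) (Icc (s + 1) M) :=
    disjoint_left.2 fun k hk hk' => by simp only [mem_Icc] at hk hk'; omega
  have hshift :
      Icc t (M + (t - s - 1)) = (Icc (s + 1) M).map (addRightEmbedding (t - s - 1)) := by
    rw [map_add_right_Icc, show s + 1 + (t - s - 1) = t by omega]
  rw [hsplit, sum_union hdisj, hshift, sum_map]
  congr 1
  · exact sum_congr rfl fun k hk => by rw [skipPlateau_of_le (mem_Icc.1 hk).2]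
  · refine sum_congr rfl fun k hk => ?_
    rw [skipPlateau_of_lt (by simp only [mem_Icc] at hk; omega)]
    rfl

theorem Bcoef_skipPlateau (e : ℕ → ℝ) (he1 : e 1 = 0) {k : ℕ} (hs : 1 ≤ s) (hst : s < t)
    (hk : 2 ≤ k) :
    Bcoef e s t (skipPlateau s t k) =
      e (skipPlateau s t k) ^ 2 / bDenom (fun j => e (skipPlateau s t j)) k := by
  rcases le_or_gt k s with hks | hks
  · have hsum : ∑ j ∈ Icc 2 (k - 1), e (skipPlateau s t j) = ∑ j ∈ Icc 2 (k - 1), e j :=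
      sum_congr rfl fun j hj => by rw [skipPlateau_of_le (by simp only [mem_Icc] at hj; omega)]
    rw [Bcoef, bDenom, hsum, skipPlateau_of_le hks, if_pos hks]
  · have hsum : ∑ j ∈ Icc 2 (k - 1), e (skipPlateau s t j) =
        ∑ j ∈ Icc 1 s, e j + ∑ j ∈ Icc t (skipPlateau s t k - 1), e j := by
      rw [sum_Icc_skipPlateau e hs hst (by omega), ← insert_Icc_add_one_left_eq_Icc hs,
        sum_insert (by simp), he1, zero_add, skipPlateau_of_lt hks,
        show k - 1 + (t - s - 1) = k + (t - s - 1) - 1 by omega]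
      rfl
    rw [Bcoef, if_neg (by rw [skipPlateau_of_lt hks]; omega), bDenom, hsum,
      cast_skipPlateau_sub hst hks]

theorem sum_Icc_pred_mul_skipPlateau (σ : ℕ → ℝ) {M : ℕ} (hs : 1 ≤ s) (hst : s < t)
    (hM : s ≤ M) :
    ∑ k ∈ Icc 2 M, ((k : ℝ) - 1) * σ (skipPlateau s t k) =
      ∑ j ∈ Icc 2 s, ((j : ℝ) - 1) * σ j +
        ∑ j ∈ Icc t (M + (t - s - 1)), ((j : ℝ) - t + s) * σ j := by
  set g : ℕ → ℝ := fun j => (if j ≤ s then (j : ℝ) - 1 else (j : ℝ) - t + s) * σ j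
  calc ∑ k ∈ Icc 2 M, ((k : ℝ) - 1) * σ (skipPlateau s t k)
      = ∑ k ∈ Icc 2 M, g (skipPlateau s t k) := by
        refine sum_congr rfl fun k _ => ?_
        rcases le_or_gt k s with hks | hks
        · simp only [g, skipPlateau_of_le hks, if_pos hks]
        · rw [← cast_skipPlateau_sub hst hks]
          simp only [g, skipPlateau_of_lt hks, if_neg (show ¬k + (t - s - 1) ≤ s by omega)]
    _ = _ := by
        rw [sum_Icc_skipPlateau g hs hst hM]
        congr 1 <;> refine sum_congr rfl fun j hj => ?_ <;> simp only [mem_Icc] at hj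
        · simp only [g, if_pos hj.2]
        · simp only [g, if_neg (show ¬j ≤ s by omega)]
end skipPlateau

theorem stmt5_general (N s t : ℕ) (e σ : ℕ → ℝ)
    (hs : 1 ≤ s) (hst : s < t) (htN : t ≤ N)
    (he1 : e 1 = 0)
    (heconst : ∀ i, s ≤ i → i ≤ t - 1 → e i = e s)
    (hestrict : ∀ j ∈ Icc 2 s ∪ Icc t N, e (j - 1) < e j)
    (hσnonneg : ∀ j ∈ Icc 2 s ∪ Icc t N, 0 ≤ σ j)
    (hratio : ∀ j ∈ Icc 2 s ∪ Icc t N, ∀ j' ∈ Icc 2 s ∪ Icc t N, j < j' →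
      σ j' * (e j - e (j - 1)) ≤ σ j * (e j' - e (j' - 1)))
    (hnorm : (∑ j ∈ Icc 2 s, ((j : ℝ) - 1) * σ j) +
        ∑ j ∈ Icc t N, ((j : ℝ) - t + s) * σ j = 1) :
    ∑ j ∈ Icc 2 s ∪ Icc t N, σ j * (e (j - 1) + e j) ≤ Bmax e s t N := by
  obtain ⟨M, rfl⟩ : ∃ M, N = M + (t - s - 1) := ⟨N - (t - s - 1), by omega⟩
  have hM : s ≤ M := by omega
  have hpred := skipPlateau_sub_one e (heconst (t - 1) (by omega) le_rfl)
  have hdisj : Disjoint (Icc 2 s) (Icc t (M + (t - s - 1))) :=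
    disjoint_left.2 fun j hj hj' => by simp only [mem_Icc] at hj hj'; omega
  rw [sum_union hdisj, ← sum_Icc_skipPlateau _ hs hst hM]
  simp only [hpred]
  refine sum_mul_add_pred_le_of_sq_div_bDenom_le M (fun k => e (skipPlateau s t k))
    (fun k => σ (skipPlateau s t k)) _ (by simp [skipPlateau_of_le hs, he1])
    (fun k hk => hpred k ▸ hestrict _ (skipPlateau_mem hk))
    (fun k hk => hσnonneg _ (skipPlateau_mem hk))
    (fun j hj j' hj' hjj' => ?_) ?_ fun i hi => ?_
  · simpa only [hpred] using
      hratio _ (skipPlateau_mem hj) _ (skipPlateau_mem hj') (skipPlateau_strictMono hjj')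
  · rw [sum_Icc_pred_mul_skipPlateau σ hs hst hM, hnorm]
  · rw [← Bcoef_skipPlateau e he1 hs hst (mem_Icc.1 hi).1]
    exact le_csSup ((((Set.finite_Icc _ _).union (Set.finite_Icc _ _)).image _).bddAbove)
      (Set.mem_image_of_mem _ (by simpa using skipPlateau_mem (s := s) (t := t) hi))

/-- Let `1 ≤ s < t ≤ N`, `e₁ = 0`, `e_s = … = e_{t−1}` and
`e_{j−1} < e_j` for all `j ∈ J = {2,…,s} ∪ {t,…,N}`. Let `σ_j ≥ 0` on `J`,
`σ_j = 0` for `s+1 ≤ j ≤ t−1`, with the ratios `σ_j/(e_j − e_{j−1})`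
nonincreasing along `J` and normalized by
`Σ_{j=2}^{s} (j−1)σ_j + Σ_{j=t}^{N} (j−t+s)σ_j = 1`. Then
`Σ_{j∈J} σ_j (e_{j−1} + e_j) ≤ B(s,t)`. -/
theorem stmt5 (N s t : ℕ) (e σ : ℕ → ℝ)
    (hs : 1 ≤ s) (hst : s < t) (htN : t ≤ N)
    (he1 : e 1 = 0)
    (heconst : ∀ i, s ≤ i → i ≤ t - 1 → e i = e s)
    (hestrict : ∀ j ∈ Icc 2 s ∪ Icc t N, e (j - 1) < e j)
    (hσnonneg : ∀ j ∈ Icc 2 s ∪ Icc t N, 0 ≤ σ j)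
    (hσzero : ∀ j, s + 1 ≤ j → j ≤ t - 1 → σ j = 0)
    (hratio : ∀ j ∈ Icc 2 s ∪ Icc t N, ∀ j' ∈ Icc 2 s ∪ Icc t N, j < j' →
      σ j' * (e j - e (j - 1)) ≤ σ j * (e j' - e (j' - 1)))
    (hnorm : (∑ j ∈ Icc 2 s, ((j : ℝ) - 1) * σ j) +
        ∑ j ∈ Icc t N, ((j : ℝ) - t + s) * σ j = 1) :
    ∑ j ∈ Icc 2 s ∪ Icc t N, σ j * (e (j - 1) + e j) ≤ Bmax e s t N :=
  stmt5_general N s t e σ hs hst htN he1 heconst hestrict hσnonneg hratio hnorm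
end

section
/- Let N, s, t be integers with 2 ≤ s < t ≤ N, and let e_1, …, e_N be real numbers with e_1 = 0 and 0 < e_2 ≤ e_3 ≤ … ≤ e_N. Fix i with 2 ≤ i ≤ s, let α = ((i−1) e_i − Σ_{j=2}^{i−1} e_j)^{−1} (the denominator being positive), and define σ_j = α (e_j − e_{j−1}) for 2 ≤ j ≤ i and σ_j = 0 for i < j ≤ N. Then Σ_{j=2}^{s} (j−1) σ_j + Σ_{j=t}^{N} (j−t+s) σ_j = 1, and Σ_{j=2}^{N} σ_j (e_{j−1} + e_j) = α e_i² = B_i. -/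
/-!
The vertex `σ` is a rescaled difference sequence of `e`, so both sums telescope: the first by
summation by parts to `(i−1)e_i − Σ_{j=2}^{i−1} e_j`, which is exactly `α⁻¹`, and the second,
since `(e_j − e_{j−1})(e_{j−1} + e_j) = e_j² − e_{j−1}²`, to `e_i²`. Positivity of `α⁻¹` comes
from monotonicity: each `e_j` with `j < i` is at most `e_i`, so `α⁻¹ ≥ e_i ≥ e_2 > 0`.
-/

open Finset

/-- The paper's `α⁻¹` for the vertex of index `i ≤ s`. -/
noncomputable def vertexDenom (e : ℕ → ℝ) (i : ℕ) : ℝ :=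
  ((i : ℝ) - 1) * e i - ∑ k ∈ Icc 2 (i - 1), e k

lemma sum_Icc_eq_sum_Icc_of_eq_zero {M : Type*} [AddCommMonoid M] {f : ℕ → M} {a i n : ℕ}
    (hin : i ≤ n) (hf : ∀ j, i < j → j ≤ n → f j = 0) :
    ∑ j ∈ Icc a n, f j = ∑ j ∈ Icc a i, f j := by
  refine (sum_subset (Icc_subset_Icc_right hin) fun j hj hji => ?_).symm
  simp only [mem_Icc] at hj hji
  exact hf j (by omega) hj.2

lemma sum_Icc_sub_pred_s6 (f : ℕ → ℝ) {m n : ℕ} (hmn : m ≤ n) :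
    ∑ j ∈ Icc (m + 1) n, (f j - f (j - 1)) = f n - f m := by
  induction n, hmn using Nat.le_induction with
  | base => simp
  | succ n hmn ih => rw [sum_Icc_succ_top (by omega), ih, Nat.add_sub_cancel]; ring

lemma sum_Icc_mul_sub_pred (e : ℕ → ℝ) {i : ℕ} (hi : 2 ≤ i) :
    ∑ j ∈ Icc 2 i, ((j : ℝ) - 1) * (e j - e (j - 1)) = vertexDenom e i - e 1 := by
  induction i, hi using Nat.le_induction with
  | base => norm_num [vertexDenom]
  | succ n hn ih =>
    obtain ⟨m, rfl⟩ : ∃ m, n = m + 1 := ⟨n - 1, by omega⟩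
    rw [sum_Icc_succ_top (by omega), ih]
    simp only [vertexDenom, Nat.add_sub_cancel, sum_Icc_succ_top (by omega : 2 ≤ m + 1)]
    push_cast
    ring

lemma sum_Icc_sub_pred_mul_add (e : ℕ → ℝ) {i : ℕ} (hi : 1 ≤ i) :
    ∑ j ∈ Icc 2 i, (e j - e (j - 1)) * (e (j - 1) + e j) = e i ^ 2 - e 1 ^ 2 := by
  rw [← sum_Icc_sub_pred_s6 (e · ^ 2) hi]
  exact sum_congr rfl fun j _ => by ring

lemma sum_Icc_le_of_monotoneOn {e : ℕ → ℝ} {i : ℕ} (hi : 2 ≤ i)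
    (he : MonotoneOn e (Set.Icc 2 i)) :
    ∑ k ∈ Icc 2 (i - 1), e k ≤ ((i : ℝ) - 2) * e i := by
  calc ∑ k ∈ Icc 2 (i - 1), e k ≤ #(Icc 2 (i - 1)) • e i :=
        sum_le_card_nsmul _ _ _ fun k hk => by
          simp only [mem_Icc] at hk
          exact he ⟨hk.1, by omega⟩ ⟨hi, le_rfl⟩ (by omega)
    _ = ((i : ℝ) - 2) * e i := by
        rw [Nat.card_Icc, nsmul_eq_mul, show i - 1 + 1 - 2 = i - 2 by omega, Nat.cast_sub hi]
        push_cast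
        ring

lemma vertexDenom_pos {e : ℕ → ℝ} {i : ℕ} (hi : 2 ≤ i) (he2 : 0 < e 2)
    (he : MonotoneOn e (Set.Icc 2 i)) : 0 < vertexDenom e i := by
  have hei : e 2 ≤ e i := he ⟨le_rfl, hi⟩ ⟨hi, le_rfl⟩ hi
  have := sum_Icc_le_of_monotoneOn hi he
  unfold vertexDenom
  nlinarith

lemma monotoneOn_Icc_of_le_succ {e : ℕ → ℝ} {N : ℕ}
    (he : ∀ j, 2 ≤ j → j < N → e j ≤ e (j + 1)) : MonotoneOn e (Set.Icc 2 N) :=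
  monotoneOn_of_le_add_one Set.ordConnected_Icc fun j _ hj hj1 => he j hj.1 (by
    simp only [Set.mem_Icc] at hj1; omega)

theorem stmt6_general (N s t i : ℕ) (e σ : ℕ → ℝ)
    (hst : s < t) (htN : t ≤ N)
    (he1 : e 1 = 0) (he2 : 0 < e 2)
    (hemono : ∀ j, 2 ≤ j → j < N → e j ≤ e (j + 1))
    (hi2 : 2 ≤ i) (his : i ≤ s)
    (hσ : ∀ j, 2 ≤ j → j ≤ i →
      σ j = (((i : ℝ) - 1) * e i - ∑ k ∈ Icc 2 (i - 1), e k)⁻¹ * (e j - e (j - 1)))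
    (hσzero : ∀ j, i < j → j ≤ N → σ j = 0) :
    0 < ((i : ℝ) - 1) * e i - ∑ k ∈ Icc 2 (i - 1), e k ∧
    (∑ j ∈ Icc 2 s, ((j : ℝ) - 1) * σ j) +
        ∑ j ∈ Icc t N, ((j : ℝ) - t + s) * σ j = 1 ∧
    ∑ j ∈ Icc 2 N, σ j * (e (j - 1) + e j) =
      (((i : ℝ) - 1) * e i - ∑ k ∈ Icc 2 (i - 1), e k)⁻¹ * (e i) ^ 2 ∧
    (((i : ℝ) - 1) * e i - ∑ k ∈ Icc 2 (i - 1), e k)⁻¹ * (e i) ^ 2 = Bcoef e s t i := by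
  change 0 < vertexDenom e i ∧ _ + _ = 1 ∧ _ = (vertexDenom e i)⁻¹ * _ ∧ _
  have hD : 0 < vertexDenom e i := vertexDenom_pos hi2 he2
    ((monotoneOn_Icc_of_le_succ hemono).mono (Set.Icc_subset_Icc_right (by omega)))
  have hσ' : ∀ j ∈ Icc 2 i, σ j = (vertexDenom e i)⁻¹ * (e j - e (j - 1)) := fun j hj =>
    hσ j (mem_Icc.1 hj).1 (mem_Icc.1 hj).2
  refine ⟨hD, ?_, ?_, by rw [Bcoef, if_pos his, div_eq_inv_mul]⟩
  · have htail : ∑ j ∈ Icc t N, ((j : ℝ) - t + s) * σ j = 0 :=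
      sum_eq_zero fun j hj => by
        rw [mem_Icc] at hj
        rw [hσzero j (by omega) hj.2, mul_zero]
    rw [htail, add_zero, sum_Icc_eq_sum_Icc_of_eq_zero his fun j hij hjs => by
      rw [hσzero j hij (by omega), mul_zero]]
    calc ∑ j ∈ Icc 2 i, ((j : ℝ) - 1) * σ j
        = (vertexDenom e i)⁻¹ * ∑ j ∈ Icc 2 i, ((j : ℝ) - 1) * (e j - e (j - 1)) := by
          rw [mul_sum]; exact sum_congr rfl fun j hj => by rw [hσ' j hj]; ring
      _ = 1 := by rw [sum_Icc_mul_sub_pred e hi2, he1, sub_zero, inv_mul_cancel₀ hD.ne']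
  · rw [sum_Icc_eq_sum_Icc_of_eq_zero (i := i) (by omega) fun j hij hjN => by
      rw [hσzero j hij hjN, zero_mul]]
    calc ∑ j ∈ Icc 2 i, σ j * (e (j - 1) + e j)
        = (vertexDenom e i)⁻¹ * ∑ j ∈ Icc 2 i, (e j - e (j - 1)) * (e (j - 1) + e j) := by
          rw [mul_sum]; exact sum_congr rfl fun j hj => by rw [hσ' j hj]; ring
      _ = (vertexDenom e i)⁻¹ * e i ^ 2 := by
          rw [sum_Icc_sub_pred_mul_add e (by omega), he1]; ring

/-- Let `2 ≤ s < t ≤ N`, `e₁ = 0` and `0 < e₂ ≤ e₃ ≤ … ≤ e_N`.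
Fix `2 ≤ i ≤ s`, let `α = ((i−1)e_i − Σ_{j=2}^{i−1} e_j)⁻¹` (the denominator
being positive) and set `σ_j = α(e_j − e_{j−1})` for `2 ≤ j ≤ i`, `σ_j = 0` for
`i < j ≤ N`. Then `Σ_{j=2}^{s} (j−1)σ_j + Σ_{j=t}^{N} (j−t+s)σ_j = 1` and
`Σ_{j=2}^{N} σ_j (e_{j−1} + e_j) = α e_i² = B_i`. -/
theorem stmt6 (N s t i : ℕ) (e σ : ℕ → ℝ)
    (hs : 2 ≤ s) (hst : s < t) (htN : t ≤ N)
    (he1 : e 1 = 0) (he2 : 0 < e 2)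
    (hemono : ∀ j, 2 ≤ j → j < N → e j ≤ e (j + 1))
    (hi2 : 2 ≤ i) (his : i ≤ s)
    (hσ : ∀ j, 2 ≤ j → j ≤ i →
      σ j = (((i : ℝ) - 1) * e i - ∑ k ∈ Icc 2 (i - 1), e k)⁻¹ * (e j - e (j - 1)))
    (hσzero : ∀ j, i < j → j ≤ N → σ j = 0) :
    0 < ((i : ℝ) - 1) * e i - ∑ k ∈ Icc 2 (i - 1), e k ∧
    (∑ j ∈ Icc 2 s, ((j : ℝ) - 1) * σ j) +
        ∑ j ∈ Icc t N, ((j : ℝ) - t + s) * σ j = 1 ∧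
    ∑ j ∈ Icc 2 N, σ j * (e (j - 1) + e j) =
      (((i : ℝ) - 1) * e i - ∑ k ∈ Icc 2 (i - 1), e k)⁻¹ * (e i) ^ 2 ∧
    (((i : ℝ) - 1) * e i - ∑ k ∈ Icc 2 (i - 1), e k)⁻¹ * (e i) ^ 2 = Bcoef e s t i :=
  stmt6_general N s t i e σ hst htN he1 he2 hemono hi2 his hσ hσzero
end

section
/- Let N, s, t be integers with 1 ≤ s < t ≤ N, let e_1, …, e_N be real numbers with e_1 = 0, e_s = e_{s+1} = … = e_{t−1}, and e_{j−1} < e_j for every j in J = {2, …, s} ∪ {t, …, N}. Let Δ be the set of tuples (σ_j)_{j∈J} of real numbers such that σ_j ≥ 0 for all j ∈ J, the ratios σ_j/(e_j − e_{j−1}) are nonincreasing along J, and Σ_{j=2}^{s} (j−1) σ_j + Σ_{j=t}^{N} (j−t+s) σ_j = 1 (where σ_j is understood to be 0 for s+1 ≤ j ≤ t−1). Then Δ is the convex hull of the points σ^{(i)}, i ∈ J, defined by σ^{(i)}_j = α_i (e_j − e_{j−1}) for j ∈ J with j ≤ i and σ^{(i)}_j = 0 for j ∈ J with j > i, where α_i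 = ((i−1) e_i − Σ_{j=2}^{i−1} e_j)^{−1} for 2 ≤ i ≤ s and α_i = ((i−t+s) e_i − (e_1 + … + e_s + e_t + … + e_{i−1}))^{−1} for t ≤ i ≤ N. -/
open Finset

/-!
For `σ ∈ Δ` the rescaled coordinates `σ_j / (e_j - e_{j-1})` form a nonnegative nonincreasing
sequence on `J`, hence a nonnegative combination of indicators of the initial segments
`{j ∈ J | j ≤ i}`. Rescaled back and normalised, these indicators are the `σ⁽ⁱ⁾`; that the
normalising constant is `α_i` is a summation by parts, using `e_1 = 0` and `e_{t-1} = e_s`.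
Conversely, `Δ` is convex and contains every `σ⁽ⁱ⁾`.
-/

/-- The coefficient `α_i`: for `2 ≤ i ≤ s`, `α_i = ((i−1)e_i − Σ_{j=2}^{i−1} e_j)⁻¹`;
for `t ≤ i ≤ N`, `α_i = ((i−t+s)e_i − (e₁ + … + e_s + e_t + … + e_{i−1}))⁻¹`. -/
noncomputable def alphaCoef (e : ℕ → ℝ) (s t i : ℕ) : ℝ :=
  if i ≤ s then
    (((i : ℝ) - 1) * e i - ∑ j ∈ Finset.Icc 2 (i - 1), e j)⁻¹
  else
    (((i : ℝ) - t + s) * e i -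
      (∑ j ∈ Finset.Icc 1 s, e j + ∑ j ∈ Finset.Icc t (i - 1), e j))⁻¹

/-- The vertex `σ⁽ⁱ⁾` of the simplex: `σ⁽ⁱ⁾_j = α_i (e_j − e_{j−1})` for `j ∈ J`,
`j ≤ i`, and `σ⁽ⁱ⁾_j = 0` otherwise (in particular outside `J`). -/
noncomputable def vertexPt (e : ℕ → ℝ) (s t N i : ℕ) : ℕ → ℝ := fun j =>
  if j ∈ Icc 2 s ∪ Icc t N ∧ j ≤ i then alphaCoef e s t i * (e j - e (j - 1)) else 0

section RatioSimplex

variable {ι : Type*} [LinearOrder ι]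

def ratioCone (J : Finset ι) (d : ι → ℝ) : Set (ι → ℝ) :=
  {σ | (∀ j ∉ J, σ j = 0) ∧ (∀ j ∈ J, 0 ≤ σ j) ∧
    ∀ j ∈ J, ∀ j' ∈ J, j < j' → σ j' * d j ≤ σ j * d j'}

def ratioSimplex (J : Finset ι) (d w : ι → ℝ) : Set (ι → ℝ) :=
  {σ | σ ∈ ratioCone J d ∧ ∑ j ∈ J, w j * σ j = 1}

noncomputable def ratioSimplexVertex (J : Finset ι) (d w : ι → ℝ) (i : ι) : ι → ℝ :=
  (∑ j ∈ J with j ≤ i, w j * d j)⁻¹ • {j | j ∈ J ∧ j ≤ i}.indicator d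

theorem sum_mul_indicator_eq_sum_filter_le (J : Finset ι) (d w : ι → ℝ) (i : ι) :
    ∑ j ∈ J, w j * {j | j ∈ J ∧ j ≤ i}.indicator d j = ∑ j ∈ J with j ≤ i, w j * d j := by
  rw [sum_filter]
  refine sum_congr rfl fun j hj => ?_
  by_cases hji : j ≤ i <;> simp [hj, hji]

theorem convex_ratioSimplex (J : Finset ι) (d w : ι → ℝ) : Convex ℝ (ratioSimplex J d w) := by
  rintro x ⟨⟨hx0, hx1, hx2⟩, hx3⟩ y ⟨⟨hy0, hy1, hy2⟩, hy3⟩ a b ha hb hab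
  simp only [ratioSimplex, ratioCone, Set.mem_ofPred_eq, Pi.add_apply, Pi.smul_apply, smul_eq_mul]
  refine ⟨⟨fun j hj => by simp [hx0 j hj, hy0 j hj],
    fun j hj => add_nonneg (mul_nonneg ha (hx1 j hj)) (mul_nonneg hb (hy1 j hj)),
    fun j hj j' hj' hjj' => ?_⟩, ?_⟩
  · have := add_le_add (mul_le_mul_of_nonneg_left (hx2 j hj j' hj' hjj') ha)
      (mul_le_mul_of_nonneg_left (hy2 j hj j' hj' hjj') hb)
    linarith
  · simp only [mul_add, sum_add_distrib, mul_left_comm _ a, mul_left_comm _ b, ← mul_sum, hx3, hy3]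
    linarith

variable {J : Finset ι} {d w : ι → ℝ}

theorem sum_filter_le_mul_pos (hd : ∀ j ∈ J, 0 < d j) (hw : ∀ j ∈ J, 0 < w j) {i : ι} (hi : i ∈ J) :
    0 < ∑ j ∈ J with j ≤ i, w j * d j :=
  sum_pos (fun j hj => mul_pos (hw j (mem_filter.1 hj).1) (hd j (mem_filter.1 hj).1))
    ⟨i, mem_filter.2 ⟨hi, le_rfl⟩⟩

theorem ratioSimplexVertex_mem (hd : ∀ j ∈ J, 0 < d j) (hw : ∀ j ∈ J, 0 < w j) {i : ι}
    (hi : i ∈ J) : ratioSimplexVertex J d w i ∈ ratioSimplex J d w := by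
  have hA := sum_filter_le_mul_pos hd hw hi
  refine ⟨⟨fun j hj => by simp [ratioSimplexVertex, hj], fun j hj => ?_,
    fun j hj j' hj' hjj' => ?_⟩, ?_⟩
  · simp only [ratioSimplexVertex, Pi.smul_apply, smul_eq_mul, Set.indicator_apply,
      Set.mem_ofPred_eq]
    split_ifs
    · exact mul_nonneg (inv_nonneg.2 hA.le) (hd j hj).le
    · simp
  · simp only [ratioSimplexVertex, Pi.smul_apply, smul_eq_mul, Set.indicator_apply,
      Set.mem_ofPred_eq]
    by_cases hj'i : j' ≤ i
    · rw [if_pos ⟨hj', hj'i⟩, if_pos ⟨hj, hjj'.le.trans hj'i⟩]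
      exact (mul_right_comm _ _ _).le
    · rw [if_neg fun h => hj'i h.2, mul_zero, zero_mul]
      split_ifs
      · exact mul_nonneg (mul_nonneg (inv_nonneg.2 hA.le) (hd j hj).le) (hd j' hj').le
      · simp
  · simp only [ratioSimplexVertex, Pi.smul_apply, smul_eq_mul, mul_left_comm (w _), ← mul_sum,
      sum_mul_indicator_eq_sum_filter_le]
    exact inv_mul_cancel₀ hA.ne'

theorem exists_eq_sum_smul_indicator_of_mem_ratioCone (hd : ∀ j ∈ J, 0 < d j) {σ : ι → ℝ}
    (hσ : σ ∈ ratioCone J d) :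
    ∃ c : ι → ℝ, (∀ i ∈ J, 0 ≤ c i) ∧ σ = ∑ i ∈ J, c i • {j | j ∈ J ∧ j ≤ i}.indicator d := by
  -- Peel off the largest index `m`: subtracting `(σ m / d m) • d` on `J` keeps the ratio
  -- conditions and makes the `m`-th coordinate vanish.
  induction J using Finset.induction_on_max generalizing σ with
  | empty => exact ⟨0, by simp, funext fun j => by simpa using hσ.1 j (notMem_empty j)⟩
  | insert m J hlt ih =>
    obtain ⟨hσ0, hσ1, hσ2⟩ := hσ
    have hm : m ∉ J := fun h => (hlt m h).false
    have hdm : 0 < d m := hd m (mem_insert_self m J)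
    set k := σ m / d m with hk
    set τ := σ - k • (↑(insert m J) : Set ι).indicator d with hτdef
    have hτ : τ ∈ ratioCone J d := by
      refine ⟨fun j hj => ?_, fun j hj => ?_, fun j hj j' hj' hjj' => ?_⟩
      · by_cases hjm : j = m
        · subst hjm
          simp [hτdef, hk, hdm.ne']
        · have hj' : j ∉ insert m J := by simp [hjm, hj]
          simp [hτdef, hσ0 j hj', hjm, hj]
      · have := hσ2 j (mem_insert_of_mem hj) m (mem_insert_self m J) (hlt j hj)
        simp only [hτdef, hk, Pi.sub_apply, Pi.smul_apply, smul_eq_mul,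
          Set.indicator_of_mem (mem_coe.2 (mem_insert_of_mem hj)), sub_nonneg, div_mul_eq_mul_div,
          div_le_iff₀ hdm]
        linarith
      · have := hσ2 j (mem_insert_of_mem hj) j' (mem_insert_of_mem hj') hjj'
        simp only [hτdef, Pi.sub_apply, Pi.smul_apply, smul_eq_mul,
          Set.indicator_of_mem (mem_coe.2 (mem_insert_of_mem hj)),
          Set.indicator_of_mem (mem_coe.2 (mem_insert_of_mem hj'))]
        linarith
    obtain ⟨c, hc, hτc⟩ := ih (fun j hj => hd j (mem_insert_of_mem hj)) hτ
    refine ⟨Function.update c m k, fun i hi => ?_, ?_⟩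
    · rcases mem_insert.1 hi with rfl | hi
      · simpa using div_nonneg (hσ1 i (mem_insert_self i J)) hdm.le
      · simpa [Function.update_of_ne (ne_of_mem_of_not_mem hi hm)] using hc i hi
    · have hhead : {j | j ∈ insert m J ∧ j ≤ m} = (↑(insert m J) : Set ι) := by
        ext j
        simp only [Set.mem_ofPred_eq, coe_insert, Set.mem_insert_iff, mem_coe, mem_insert,
          and_iff_left_iff_imp]
        rintro (rfl | hj)
        exacts [le_rfl, (hlt j hj).le]
      have htail : ∀ i ∈ J, Function.update c m k i • {j | j ∈ insert m J ∧ j ≤ i}.indicator d =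
          c i • {j | j ∈ J ∧ j ≤ i}.indicator d := by
        intro i hi
        rw [Function.update_of_ne (ne_of_mem_of_not_mem hi hm)]
        congr 3
        ext j
        simp only [mem_insert, and_congr_left_iff, or_iff_right_iff_imp]
        rintro hji rfl
        exact absurd (hji.trans_lt (hlt i hi)) (lt_irrefl _)
      rw [sum_insert hm, Function.update_self, hhead, sum_congr rfl htail, ← hτc, hτdef,
        add_sub_cancel]

theorem ratioSimplex_eq_convexHull (hd : ∀ j ∈ J, 0 < d j) (hw : ∀ j ∈ J, 0 < w j) :
    ratioSimplex J d w = convexHull ℝ (ratioSimplexVertex J d w '' J) := by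
  refine Set.Subset.antisymm ?_ (convexHull_min ?_ (convex_ratioSimplex J d w))
  · rintro σ ⟨hσ, hσw⟩
    obtain ⟨c, hc, rfl⟩ := exists_eq_sum_smul_indicator_of_mem_ratioCone hd hσ
    set A : ι → ℝ := fun i => ∑ j ∈ J with j ≤ i, w j * d j with hA
    have hApos : ∀ i ∈ J, 0 < A i := fun i hi => sum_filter_le_mul_pos hd hw hi
    have hcomb : ∑ i ∈ J, c i • {j | j ∈ J ∧ j ≤ i}.indicator d =
        ∑ i ∈ J, (c i * A i) • ratioSimplexVertex J d w i := by
      refine sum_congr rfl fun i hi => ?_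
      rw [ratioSimplexVertex, smul_smul, mul_assoc, mul_inv_cancel₀ (hApos i hi).ne', mul_one]
    have hmass : ∑ i ∈ J, c i * A i = 1 := by
      rw [← hσw]
      simp only [Finset.sum_apply, Pi.smul_apply, smul_eq_mul, mul_sum]
      rw [sum_comm]
      refine sum_congr rfl fun i _ => ?_
      simp only [hA, ← sum_mul_indicator_eq_sum_filter_le J d w i, mul_sum]
      exact sum_congr rfl fun j _ => by ring
    rw [hcomb]
    exact (convex_convexHull ℝ _).sum_mem (fun i hi => mul_nonneg (hc i hi) (hApos i hi).le)
      hmass fun i hi => subset_convexHull ℝ _ ⟨i, hi, rfl⟩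
  · rintro _ ⟨i, hi, rfl⟩
    exact ratioSimplexVertex_mem hd hw hi

end RatioSimplex

theorem sum_Icc_eq_sum_Icc_sub_one_add {M : Type*} [AddCommMonoid M] (f : ℕ → M) {a b : ℕ}
    (hb : 1 ≤ b) (hab : a ≤ b) : ∑ j ∈ Icc a b, f j = ∑ j ∈ Icc a (b - 1), f j + f b := by
  rw [← insert_Icc_sub_one_right_eq_Icc hab, sum_insert (by simp only [mem_Icc]; omega), add_comm]

theorem sum_Icc_sub_mul_sub (e : ℕ → ℝ) (c : ℝ) {a b : ℕ} (ha : 1 ≤ a) (hab : a ≤ b) :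
    ∑ j ∈ Icc a b, ((j : ℝ) - c) * (e j - e (j - 1)) =
      (b - c) * e b - (a - c) * e (a - 1) - ∑ j ∈ Icc a (b - 1), e j := by
  induction b, hab using Nat.le_induction with
  | base => rw [Icc_self, sum_singleton, Icc_eq_empty (by omega), sum_empty]; ring
  | succ b hab ih =>
    rw [sum_Icc_succ_top (by omega), ih, Nat.add_sub_cancel,
      sum_Icc_eq_sum_Icc_sub_one_add e (ha.trans hab) hab]
    push_cast
    ring

theorem sum_Icc_two_eq_sum_Icc_one {M : Type*} [AddCommMonoid M] (f : ℕ → M) (hf : f 1 = 0)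
    (n : ℕ) : ∑ j ∈ Icc 2 n, f j = ∑ j ∈ Icc 1 n, f j := by
  rcases Nat.eq_zero_or_pos n with rfl | hn
  · simp
  · rw [← insert_Icc_add_one_left_eq_Icc (show 1 ≤ n from hn), sum_insert (by simp), hf, zero_add]
    rfl

noncomputable def normWeight (s t j : ℕ) : ℝ := if j ≤ s then (j : ℝ) - 1 else (j : ℝ) - t + s

section Normalization

variable {N s t : ℕ}

theorem normWeight_pos (hs : 1 ≤ s) (hst : s < t) {j : ℕ} (hj : j ∈ Icc 2 s ∪ Icc t N) :
    0 < normWeight s t j := by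
  simp only [mem_union, mem_Icc] at hj
  unfold normWeight
  split_ifs with hjs
  · have : (2 : ℝ) ≤ j := by exact_mod_cast (show 2 ≤ j by omega)
    linarith
  · have : (t : ℝ) ≤ j := by exact_mod_cast (show t ≤ j by omega)
    have : (1 : ℝ) ≤ s := by exact_mod_cast hs
    linarith

theorem sum_normWeight_mul (hst : s < t) (σ : ℕ → ℝ) :
    ∑ j ∈ Icc 2 s ∪ Icc t N, normWeight s t j * σ j =
      (∑ j ∈ Icc 2 s, ((j : ℝ) - 1) * σ j) + ∑ j ∈ Icc t N, ((j : ℝ) - t + s) * σ j := by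
  rw [sum_union (disjoint_left.2 fun j hj hj' => by simp only [mem_Icc] at hj hj'; omega)]
  congr 1
  · refine sum_congr rfl fun j hj => ?_
    rw [normWeight, if_pos (mem_Icc.1 hj).2]
  · refine sum_congr rfl fun j hj => ?_
    rw [normWeight, if_neg (by simp only [mem_Icc] at hj; omega)]

variable {e : ℕ → ℝ}

theorem alphaCoef_eq_inv_sum (hs : 1 ≤ s) (hst : s < t) (he1 : e 1 = 0) (hets : e (t - 1) = e s)
    {i : ℕ} (hi : i ∈ Icc 2 s ∪ Icc t N) :
    alphaCoef e s t i =
      (∑ j ∈ Icc 2 s ∪ Icc t N with j ≤ i, normWeight s t j * (e j - e (j - 1)))⁻¹ := by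
  have hlow : ∀ n : ℕ, 1 ≤ n → ∑ j ∈ Icc 2 n, ((j : ℝ) - 1) * (e j - e (j - 1)) =
      (n - 1) * e n - ∑ j ∈ Icc 1 (n - 1), e j := by
    intro n hn
    rw [sum_Icc_two_eq_sum_Icc_one _ (by simp), sum_Icc_sub_mul_sub e 1 le_rfl hn]
    simp
  have he : ∀ n, ∑ j ∈ Icc 2 n, e j = ∑ j ∈ Icc 1 n, e j := sum_Icc_two_eq_sum_Icc_one e he1
  rcases mem_union.1 hi with hi | hi <;> obtain ⟨hi1, hi2⟩ := mem_Icc.1 hi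
  · have hJ : {j ∈ Icc 2 s ∪ Icc t N | j ≤ i} = Icc 2 i := by
      ext j; simp only [mem_filter, mem_union, mem_Icc]; omega
    rw [alphaCoef, if_pos hi2, hJ, he, ← hlow i (by omega)]
    congr 1
    exact sum_congr rfl fun j hj => by
      rw [normWeight, if_pos (by simp only [mem_Icc] at hj; omega)]
  · have hJ : {j ∈ Icc 2 s ∪ Icc t N | j ≤ i} = Icc 2 s ∪ Icc t i := by
      ext j; simp only [mem_filter, mem_union, mem_Icc]; omega
    rw [alphaCoef, if_neg (by omega), hJ, sum_normWeight_mul hst, hlow s hs]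
    simp only [sub_add]
    rw [sum_Icc_sub_mul_sub e _ (by omega) hi1, hets, sum_Icc_eq_sum_Icc_sub_one_add e hs hs]
    congr 1
    ring

end Normalization

theorem stmt8_general (N s t : ℕ) (e : ℕ → ℝ)
    (hs : 1 ≤ s) (hst : s < t)
    (he1 : e 1 = 0)
    (heconst : ∀ j, s ≤ j → j ≤ t - 1 → e j = e s)
    (hestrict : ∀ j ∈ Icc 2 s ∪ Icc t N, e (j - 1) < e j) :
    {σ : ℕ → ℝ |
        (∀ j ∉ Icc 2 s ∪ Icc t N, σ j = 0) ∧
        (∀ j ∈ Icc 2 s ∪ Icc t N, 0 ≤ σ j) ∧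
        (∀ j ∈ Icc 2 s ∪ Icc t N, ∀ j' ∈ Icc 2 s ∪ Icc t N, j < j' →
          σ j' * (e j - e (j - 1)) ≤ σ j * (e j' - e (j' - 1))) ∧
        (∑ j ∈ Icc 2 s, ((j : ℝ) - 1) * σ j) +
            ∑ j ∈ Icc t N, ((j : ℝ) - t + s) * σ j = 1} =
      convexHull ℝ (vertexPt e s t N '' ↑(Icc 2 s ∪ Icc t N)) := by
  have hets : e (t - 1) = e s := heconst (t - 1) (by omega) le_rfl
  have hvertex : Set.EqOn (vertexPt e s t N)
      (ratioSimplexVertex (Icc 2 s ∪ Icc t N) (fun j => e j - e (j - 1)) (normWeight s t))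
      ↑(Icc 2 s ∪ Icc t N) := fun i hi => by
    funext j
    simp only [vertexPt, ratioSimplexVertex, alphaCoef_eq_inv_sum hs hst he1 hets hi,
      Pi.smul_apply, smul_eq_mul, Set.indicator_apply, Set.mem_ofPred_eq]
    split_ifs <;> ring
  rw [hvertex.image_eq, ← ratioSimplex_eq_convexHull (fun j hj => sub_pos.2 (hestrict j hj))
    (fun j hj => normWeight_pos hs hst hj)]
  ext σ
  simp only [ratioSimplex, ratioCone, Set.mem_ofPred_eq, sum_normWeight_mul hst, and_assoc]

/-- Let `1 ≤ s < t ≤ N`, `e₁ = 0`, `e_s = … = e_{t−1}` and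
`e_{j−1} < e_j` for all `j ∈ J = {2,…,s} ∪ {t,…,N}`. The simplex `Δ` of tuples
`(σ_j)_{j∈J}` (extended by `0` outside `J`) with `σ_j ≥ 0`, ratios
`σ_j/(e_j − e_{j−1})` nonincreasing along `J`, and
`Σ_{j=2}^{s} (j−1)σ_j + Σ_{j=t}^{N} (j−t+s)σ_j = 1`, is the convex hull of the
points `σ⁽ⁱ⁾`, `i ∈ J`. -/
theorem stmt8 (N s t : ℕ) (e : ℕ → ℝ)
    (hs : 1 ≤ s) (hst : s < t) (htN : t ≤ N)
    (he1 : e 1 = 0)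
    (heconst : ∀ j, s ≤ j → j ≤ t - 1 → e j = e s)
    (hestrict : ∀ j ∈ Icc 2 s ∪ Icc t N, e (j - 1) < e j) :
    {σ : ℕ → ℝ |
        (∀ j ∉ Icc 2 s ∪ Icc t N, σ j = 0) ∧
        (∀ j ∈ Icc 2 s ∪ Icc t N, 0 ≤ σ j) ∧
        (∀ j ∈ Icc 2 s ∪ Icc t N, ∀ j' ∈ Icc 2 s ∪ Icc t N, j < j' →
          σ j' * (e j - e (j - 1)) ≤ σ j * (e j' - e (j' - 1))) ∧
        (∑ j ∈ Icc 2 s, ((j : ℝ) - 1) * σ j) +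
            ∑ j ∈ Icc t N, ((j : ℝ) - t + s) * σ j = 1} =
      convexHull ℝ (vertexPt e s t N '' ↑(Icc 2 s ∪ Icc t N)) :=
  stmt8_general N s t e hs hst he1 heconst hestrict
end
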